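/- Let p > 1 and define C_1 = Mε^p (with M, ε > 0) and C_{j+1} = N·C_j^p/(2p)^j with N > 0. Then C_{j+1} ≥ N^{-1/(p-1)} · exp(p^j · I) for all j ≥ 1, where I := (1/(p-1))·log N + log(Mε^p) - (S_p/p)·log(2p) and S_p := Σ_{i=0}^{∞}(i+1)p^{-i}. -/
import Mathlib


theorem recursion_lower_bound (p N M ε : ℝ) (hp : 1 < p) (hN : 0 < N) (hM : 0 < M)
    (hε : 0 < ε) (C : ℕ → ℝ) (hC1 : C 1 = M * ε ^ p)
    (hrec : ∀ j : ℕ, 1 ≤ j → C (j + 1) = N * (C j) ^ p / (2 * p) ^ j) :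
    ∀ j : ℕ, 1 ≤ j →
      C (j + 1) ≥ N ^ (-(1 / (p - 1))) *
        Real.exp (p ^ j * ((1 / (p - 1)) * Real.log N + Real.log (M * ε ^ p) -
          ((∑' i : ℕ, ((i : ℝ) + 1) * p ^ (-(i : ℝ))) / p) * Real.log (2 * p))) := by
  have hp0 : (0:ℝ) < p := lt_trans one_pos hp
  have hp0' : p ≠ 0 := ne_of_gt hp0
  have hps : p - 1 ≠ 0 := ne_of_gt (by linarith)
  set r := p⁻¹ with hrdef
  have hr0 : (0:ℝ) ≤ r := inv_nonneg.mpr hp0.le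
  have hr1 : r < 1 := inv_lt_one_of_one_lt₀ hp
  have hsum : Summable (fun i : ℕ => ((i:ℝ)+1) * r ^ i) := by
    have h1 := summable_pow_mul_geometric_of_norm_lt_one (R := ℝ) 1
      (r := r) (by rwa [Real.norm_eq_abs, abs_of_nonneg hr0])
    have h2 : Summable (fun i : ℕ => r ^ i) := summable_geometric_of_lt_one hr0 hr1
    simpa [add_mul, one_mul, pow_one] using h1.add h2
  set S := ∑' i : ℕ, ((i:ℝ)+1) * r ^ i with hS
  have hSrw : (∑' i : ℕ, ((i : ℝ) + 1) * p ^ (-(i : ℝ))) = S := by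
    apply tsum_congr; intro i
    rw [Real.rpow_neg hp0.le, Real.rpow_natCast, hrdef, inv_pow]
  set P : ℕ → ℝ := fun n => ∑ m ∈ Finset.range n, ((m:ℝ)+1) * r^m with hPdef
  set T : ℕ → ℝ := fun k => p^k / p * P k with hTdef
  have hPle : ∀ n, P n ≤ S :=
    fun n => Summable.sum_le_tsum (Finset.range n) (fun i _ => by positivity) hsum
  have hTrec : ∀ k : ℕ, T (k+1) = p * T k + ((k:ℝ)+1) := by
    intro k
    have hpk : (p:ℝ)^k ≠ 0 := pow_ne_zero _ hp0'
    simp only [hTdef, hPdef, Finset.sum_range_succ]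
    rw [hrdef, inv_pow]
    field_simp
    ring
  have h2p : (0:ℝ) < 2*p := by positivity
  have key : ∀ k : ℕ, 0 < C (k+1) ∧ Real.log (C (k+1)) =
      ((p^k - 1)/(p-1)) * Real.log N + p^k * Real.log (M * ε^p)
        - T k * Real.log (2*p) := by
    intro k
    induction k with
    | zero =>
      have hpos : 0 < M * ε ^ p := mul_pos hM (Real.rpow_pos_of_pos hε p)
      refine ⟨by rw [hC1]; exact hpos, ?_⟩
      rw [hC1]
      simp [hTdef, hPdef]
    | succ k ih =>
      obtain ⟨hpos, hlog⟩ := ih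
      have hrec' := hrec (k+1) (Nat.le_add_left 1 k)
      have hCpos : 0 < C (k+1+1) := by
        rw [hrec']
        exact div_pos (mul_pos hN (Real.rpow_pos_of_pos hpos p)) (pow_pos h2p _)
      refine ⟨hCpos, ?_⟩
      rw [hrec', Real.log_div (ne_of_gt (mul_pos hN (Real.rpow_pos_of_pos hpos p)))
          (pow_ne_zero _ (ne_of_gt h2p)),
        Real.log_mul (ne_of_gt hN) (ne_of_gt (Real.rpow_pos_of_pos hpos p)),
        Real.log_rpow hpos, Real.log_pow, hlog, hTrec k]
      push_cast
      field_simp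
      ring
  intro j hj
  obtain ⟨hpos, hlog⟩ := key j
  rw [hSrw]
  have hL3 : 0 < Real.log (2*p) := Real.log_pos (by linarith)
  have hT : T j ≤ p^j * S / p := by
    have h1 : p^j / p * P j ≤ p^j / p * S :=
      mul_le_mul_of_nonneg_left (hPle j) (by positivity)
    calc T j = p^j / p * P j := rfl
      _ ≤ p^j / p * S := h1
      _ = p^j * S / p := by ring
  rw [ge_iff_le, Real.rpow_def_of_pos hN, ← Real.exp_add]
  have hexp : Real.log N * -(1/(p-1)) + p^j * ((1/(p-1)) * Real.log N
      + Real.log (M*ε^p) - S/p * Real.log (2*p)) ≤ Real.log (C (j+1)) := by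
    have hid : Real.log N * -(1/(p-1)) + p^j * ((1/(p-1)) * Real.log N
        + Real.log (M*ε^p) - S/p * Real.log (2*p))
        = ((p^j - 1)/(p-1)) * Real.log N + p^j * Real.log (M*ε^p)
          - (p^j * S / p) * Real.log (2*p) := by
      field_simp
      ring
    rw [hid, hlog]
    have := mul_le_mul_of_nonneg_right hT hL3.le
    linarith
  calc Real.exp (Real.log N * -(1/(p-1)) + p^j * ((1/(p-1)) * Real.log N
      + Real.log (M*ε^p) - S/p * Real.log (2*p)))
      ≤ Real.exp (Real.log (C (j+1))) := Real.exp_le_exp.mpr hexp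
    _ = C (j+1) := Real.exp_log hpos
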